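/- π_n is a probability measure on 𝒯_n: Σ_{t ∈ 𝒯_n} m(t) n(t) = ∏_{i=2}^n C(i,2), i.e. Σ_{t ∈ 𝒯_n} π_n(t) = 1. -/

import Mathlib

/-!
Common definitions: rooted unlabeled trees on `n` vertices, the growth/pruning
coefficients `n(t,t')` and `m(t,t')`, the measure `π_n`, the up/down transition
probabilities, the down-up and up-down Markov chains, and separation distance.

A rooted tree is represented as `PreTree.node cs` where `cs` is the list of
subtrees of the root's children.  An *unlabeled* rooted tree is represented by
its canonical representative (children recursively sorted by an injective
encoding into `ℕ`), and `trees n` is the finite set of canonical rooted trees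
on `n` vertices.
-/

namespace RootedTreeChain

inductive PreTree : Type where
  | node : List PreTree → PreTree

namespace PreTree

/- Number of vertices. -/
mutual
  def size : PreTree → ℕ
    | .node cs => 1 + sizeList cs
  def sizeList : List PreTree → ℕ
    | [] => 0
    | t :: ts => size t + sizeList ts
end

mutual
def deq : (a b : PreTree) → Decidable (a = b)
  | .node cs, .node ds =>
    match deqList cs ds with
    | isTrue h => isTrue (by rw [h])
    | isFalse h => isFalse (by intro hh; cases hh; exact h rfl)
def deqList : (as bs : List PreTree) → Decidable (as = bs)
  | [], [] => isTrue rfl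
  | [], _ :: _ => isFalse (by simp)
  | _ :: _, [] => isFalse (by simp)
  | a :: as, b :: bs =>
    match deq a b, deqList as bs with
    | isTrue h1, isTrue h2 => isTrue (by rw [h1, h2])
    | isFalse h1, _ => isFalse (by intro hh; injection hh; contradiction)
    | _, isFalse h2 => isFalse (by intro hh; injection hh; contradiction)
end

instance : DecidableEq PreTree := deq

/- An injective encoding of trees into `ℕ`, used only to sort children
so that each unlabeled rooted tree has a unique canonical representative. -/
mutual
  def enc : PreTree → ℕ
    | .node cs => encList cs
  def encList : List PreTree → ℕ
    | [] => 0
    | t :: ts => Nat.pair (enc t) (encList ts) + 1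
end

/- Canonical representative of the isomorphism class of a rooted tree:
recursively sort the children by their encoding. -/
mutual
  def canon : PreTree → PreTree
    | .node cs => .node ((canonList cs).mergeSort (fun a b => enc a ≤ enc b))
  def canonList : List PreTree → List PreTree
    | [] => []
    | t :: ts => canon t :: canonList ts
end

/-- The one-vertex rooted tree `•`. -/
def leaf : PreTree := .node []

/- The addresses (paths of child indices from the root) of all vertices. -/
mutual
  def positions : PreTree → List (List ℕ)
    | .node cs => [] :: positionsList 0 cs
  def positionsList : ℕ → List PreTree → List (List ℕ)
    | _, [] => []
    | i, t :: ts => (positions t).map (fun p => i :: p) ++ positionsList (i + 1) ts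
end

/- The addresses of all terminal vertices (vertices with no outgoing edge). -/
mutual
  def termPositions : PreTree → List (List ℕ)
    | .node [] => [[]]
    | .node (c :: cs) => termPositionsList 0 (c :: cs)
  def termPositionsList : ℕ → List PreTree → List (List ℕ)
    | _, [] => []
    | i, t :: ts => (termPositions t).map (fun p => i :: p) ++ termPositionsList (i + 1) ts
end

/- Attach a new terminal vertex by an edge to the vertex at address `p`. -/
mutual
  def addLeafAt : PreTree → List ℕ → PreTree
    | .node cs, [] => .node (cs ++ [leaf])
    | .node cs, i :: p => .node (addLeafAtList cs i p)
  def addLeafAtList : List PreTree → ℕ → List ℕ → List PreTree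
    | [], _, _ => []
    | t :: ts, 0, p => addLeafAt t p :: ts
    | t :: ts, i + 1, p => t :: addLeafAtList ts i p
end

/- Remove the (terminal) vertex at address `p` together with the edge into it. -/
mutual
  def removeAt : PreTree → List ℕ → PreTree
    | .node cs, [] => .node cs
    | .node cs, [i] => .node (cs.eraseIdx i)
    | .node cs, i :: p => .node (removeAtList cs i p)
  def removeAtList : List PreTree → ℕ → List ℕ → List PreTree
    | [], _, _ => []
    | t :: ts, 0, p => removeAt t p :: ts
    | t :: ts, i + 1, p => t :: removeAtList ts i p
end

/-- For `s ↗ t` (and more generally any `s, t` with `size t = size s + 1`),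
`ncoef s t` is `n(s,t)`: the number of vertices of `s` to which a new edge can
be added to obtain `t`. -/
def ncoef (s t : PreTree) : ℕ :=
  ((positions s).filter (fun p => canon (addLeafAt s p) = t)).length

/-- For `s ↗ t`, `mcoef s t` is `m(s,t)`: the number of edges of `t` (into a
terminal vertex) which when removed give `s`. -/
def mcoef (s t : PreTree) : ℕ :=
  ((termPositions t).filter (fun p => canon (removeAt t p) = s)).length

/-- The list of all (canonical representatives of) rooted unlabeled trees on
`n` vertices: every tree on `n+1 ≥ 2` vertices is obtained by attaching a new
terminal vertex to a tree on `n` vertices. -/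
def treeList : ℕ → List PreTree
  | 0 => []
  | 1 => [leaf]
  | n + 2 =>
      ((treeList (n + 1)).flatMap
        (fun t => (positions t).map (fun p => canon (addLeafAt t p)))).dedup

/-- The set `𝒯_n` of rooted unlabeled trees on `n` vertices. -/
def trees (n : ℕ) : Finset PreTree := (treeList n).toFinset

/-- `T_n = |𝒯_n|`, the number of rooted unlabeled trees on `n` vertices. -/
def T (n : ℕ) : ℕ := (trees n).card

/-- Generalized growth coefficients: `nGen k t t'` is the coefficient `n(t,t')`
of `t'` in `G^k(t)` (for `size t' = size t + k`). -/
def nGen : ℕ → PreTree → PreTree → ℕ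
  | 0, t, t' => if t = t' then 1 else 0
  | k + 1, t, t' => ((treeList (t.size + k)).map (fun s => nGen k t s * ncoef s t')).sum

/-- Generalized pruning coefficients: `mGen k t t'` is the coefficient `m(t,t')`
of `t` in `P^k(t')` (for `size t' = size t + k`). -/
def mGen : ℕ → PreTree → PreTree → ℕ
  | 0, t, t' => if t = t' then 1 else 0
  | k + 1, t, t' => ((treeList (t'.size - 1)).map (fun s => mcoef s t' * mGen k t s)).sum

/-- `m(t) = m(•,t)`, the number of ways to take `t` apart by sequentially
removing terminal edges. -/
def mWt (t : PreTree) : ℕ := mGen (t.size - 1) leaf t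

/-- `n(t) = n(•,t)`, the number of ways to build `t` up from `•`. -/
def nWt (t : PreTree) : ℕ := nGen (t.size - 1) leaf t

/-- The measure `π_n(t) = m(t) n(t) / ∏_{i=2}^n C(i,2)` on `𝒯_n`. -/
def piM (n : ℕ) (t : PreTree) : ℚ :=
  (mWt t * nWt t : ℚ) / ∏ i ∈ Finset.Icc 2 n, (Nat.choose i 2 : ℚ)

/-- Upward transition probability `P_u(s,t) = m(s,t) n(t) / (C(n,2) n(s))`
from `s ∈ 𝒯_{n-1}` to `t ∈ 𝒯_n`. -/
def Pu (n : ℕ) (s t : PreTree) : ℚ :=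
  (mcoef s t : ℚ) * (nWt t : ℚ) / ((Nat.choose n 2 : ℚ) * (nWt s : ℚ))

/-- Downward transition probability `P_d(t,s) = m(s,t) m(s) / m(t)`
from `t ∈ 𝒯_n` to `s ∈ 𝒯_{n-1}`. -/
def Pd (t s : PreTree) : ℚ :=
  (mcoef s t : ℚ) * (mWt s : ℚ) / (mWt t : ℚ)

/-- The down-up Markov chain on `𝒯_n`:
`K(t,t') = Σ_{s : s ↗ t, s ↗ t'} P_d(t,s) P_u(s,t')`.  (The sum may be taken
over all `s ∈ 𝒯_{n-1}` since the summand vanishes unless `s ↗ t` and `s ↗ t'`.) -/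
def K (n : ℕ) (t t' : PreTree) : ℚ :=
  ∑ s ∈ trees (n - 1), Pd t s * Pu n s t'

/-- `r`-step transition probabilities `K^r(t,t')` of the down-up chain. -/
def Kpow (n : ℕ) : ℕ → PreTree → PreTree → ℚ
  | 0, t, t' => if t = t' then 1 else 0
  | r + 1, t, t' => ∑ s ∈ trees n, K n t s * Kpow n r s t'

/-- The up-down Markov chain on `𝒯_n`:
`DU_n(t,t') = Σ_{s : s ⋗ t, s ⋗ t'} P_u(t,s) P_d(s,t')`. -/
def DU (n : ℕ) (t t' : PreTree) : ℚ :=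
  ∑ s ∈ trees (n + 1), Pu (n + 1) t s * Pd s t'

/-- `r`-step transition probabilities of the up-down chain. -/
def DUpow (n : ℕ) : ℕ → PreTree → PreTree → ℚ
  | 0, t, t' => if t = t' then 1 else 0
  | r + 1, t, t' => ∑ s ∈ trees n, DU n t s * DUpow n r s t'

/-- Maximal separation distance `s^*(r) = max_{t,t' ∈ 𝒯_n} [1 - K^r(t,t')/π_n(t')]`
of the down-up chain on `𝒯_n`. -/
noncomputable def sStar (n r : ℕ) : ℝ :=
  sSup {x : ℝ | ∃ t ∈ trees n, ∃ t' ∈ trees n,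
    x = 1 - (Kpow n r t t' : ℝ) / (piM n t' : ℝ)}

/-- Maximal separation distance of the up-down chain on `𝒯_n`. -/
noncomputable def sStarDU (n r : ℕ) : ℝ :=
  sSup {x : ℝ | ∃ t ∈ trees n, ∃ t' ∈ trees n,
    x = 1 - (DUpow n r t t' : ℝ) / (piM n t' : ℝ)}

/-- The path on `n` vertices (rooted at an end): the unique rooted tree on
`n ≥ 2` vertices with exactly one terminal vertex. -/
def pathTree : ℕ → PreTree
  | 0 => leaf
  | 1 => leaf
  | n + 2 => .node [pathTree (n + 1)]

/-- The star on `n` vertices (rooted at the center): the unique rooted tree on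
`n` vertices with `n-1` terminal vertices. -/
def starTree (n : ℕ) : PreTree := .node (List.replicate (n - 1) leaf)


/- The order of the symmetry group `SG(t) = ∏_{v ∈ t} SG(t,v)`, where for a
vertex `v` with children `v_1, …, v_k`, `SG(t,v)` is generated by the
permutations exchanging isomorphic subtrees rooted at the `v_i`. -/
mutual
  def sgOrder : PreTree → ℕ
    | .node cs => sgOrderList cs *
        ((canonList cs).dedup.map (fun c => Nat.factorial ((canonList cs).count c))).prod
  def sgOrderList : List PreTree → ℕ
    | [] => 1
    | t :: ts => sgOrder t * sgOrderList ts
end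

/- `hProd t = ∏_{v ∈ t} h(v)`, the product over all vertices `v` of `t` of the
number `h(v)` of vertices of the subtree rooted at `v`. -/
mutual
  def hProd : PreTree → ℕ
    | .node cs => size (.node cs) * hProdList cs
  def hProdList : List PreTree → ℕ
    | [] => 1
    | t :: ts => hProd t * hProdList ts
end

/-- The matrix entry of `G P : ℂ𝒯_n → ℂ𝒯_n`: the coefficient of `t'` in `G(P(t))`. -/
def gpEntry (n : ℕ) (t t' : PreTree) : ℕ :=
  ∑ s ∈ trees (n - 1), mcoef s t * ncoef s t'

/-- The matrix entry of `(G P)^l : ℂ𝒯_n → ℂ𝒯_n`: the coefficient of `t'` in `(GP)^l(t)`. -/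
def gpPow (n : ℕ) : ℕ → PreTree → PreTree → ℕ
  | 0, t, t' => if t = t' then 1 else 0
  | l + 1, t, t' => ∑ u ∈ trees n, gpPow n l t u * gpEntry n u t'

end PreTree


/-!
The growth and pruning operators satisfy the commutation relation `P G = G P + n · id` on
`ℂ𝒯_n`. It already holds before identifying isomorphic trees: growing a new leaf at a vertex `v`
and then pruning a terminal vertex `w` other than the new leaf gives the same tree as pruning `w`
and then growing at `v`, while pruning the new leaf itself restores the tree, once for each of the
`n` vertices `v`. Since `n(t)` is the coefficient of `t` in `G^{n-1} •`, the relation gives by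
induction `Σ_{t ∈ 𝒯_{n+1}} n(t) m(s,t) = (C(n,2) + n) n(s) = C(n+1,2) n(s)`, and then
`Σ_{t ∈ 𝒯_{n+1}} m(t) n(t) = Σ_{s ∈ 𝒯_n} m(s) Σ_t m(s,t) n(t) = C(n+1,2) Σ_{s ∈ 𝒯_n} m(s) n(s)`.
-/

namespace PreTree

open Multiset

theorem induction_children {P : PreTree → Prop}
    (h : ∀ cs, (∀ c ∈ cs, P c) → P (.node cs)) (t : PreTree) : P t :=
  PreTree.rec (motive_1 := P) (motive_2 := fun cs => ∀ c ∈ cs, P c) h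
    (by simp) (fun _ _ hc hcs => List.forall_mem_cons.2 ⟨hc, hcs⟩) t

theorem size_node (cs : List PreTree) : size (.node cs) = 1 + (cs.map size).sum := by
  rw [size]
  congr 1
  induction cs with
  | nil => rfl
  | cons c cs ih => rw [sizeList, ih, List.map_cons, List.sum_cons]

theorem size_pos (t : PreTree) : 0 < size t := by
  cases t
  rw [size_node]
  omega

@[simp]
theorem size_leaf : size leaf = 1 := rfl

mutual
theorem enc_injective : ∀ t u : PreTree, enc t = enc u → t = u
  | .node cs, .node ds, h => congrArg node (encList_injective cs ds h)
theorem encList_injective : ∀ cs ds : List PreTree, encList cs = encList ds → cs = ds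
  | [], [], _ => rfl
  | [], _ :: _, h | _ :: _, [], h => by simp [encList] at h
  | c :: cs, d :: ds, h => by
    simp only [encList, Nat.add_right_cancel_iff, Nat.pair_eq_pair] at h
    rw [enc_injective c d h.1, encList_injective cs ds h.2]
end

theorem canon_node (cs : List PreTree) :
    canon (.node cs) = .node ((cs.map canon).mergeSort (fun a b => enc a ≤ enc b)) := by
  rw [canon]
  congr 2
  induction cs with
  | nil => rfl
  | cons c cs ih => rw [canonList, ih, List.map_cons]

theorem mergeSort_enc_eq_of_perm {l₁ l₂ : List PreTree} (h : l₁.Perm l₂) :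
    l₁.mergeSort (fun a b => enc a ≤ enc b) = l₂.mergeSort (fun a b => enc a ≤ enc b) := by
  have : Std.Antisymm (fun a b : PreTree => enc a ≤ enc b) :=
    ⟨fun a b hab hba => enc_injective a b (le_antisymm hab hba)⟩
  have sorted (l : List PreTree) :
      (l.mergeSort (fun a b => enc a ≤ enc b)).Pairwise (fun a b => enc a ≤ enc b) := by
    simpa using List.pairwise_mergeSort (le := fun a b => enc a ≤ enc b)
      (by simpa using fun a b c => le_trans) (by simpa using fun a b => le_total _ _) l
  exact ((List.mergeSort_perm _ _).trans (h.trans (List.mergeSort_perm _ _).symm)).eq_of_pairwise'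
    (sorted l₁) (sorted l₂)

def key (cs : List PreTree) : Multiset PreTree := (cs.map canon : List PreTree)

theorem key_eq_map_canon (cs : List PreTree) : key cs = (cs : Multiset PreTree).map canon := rfl

theorem key_append (l₁ l₂ : List PreTree) : key (l₁ ++ l₂) = key l₁ + key l₂ := by
  simp [key]

theorem canon_node_eq_canon_node_iff {cs ds : List PreTree} :
    canon (.node cs) = canon (.node ds) ↔ key cs = key ds := by
  rw [canon_node, canon_node, node.injEq, key, key, coe_eq_coe]
  refine ⟨fun h => ?_, mergeSort_enc_eq_of_perm⟩
  have hperm := List.mergeSort_perm (cs.map canon) (fun a b => enc a ≤ enc b)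
  rw [h] at hperm
  exact hperm.symm.trans (List.mergeSort_perm _ _)

theorem exists_canon_node_eq (cs : List PreTree) :
    ∃ ds : List PreTree, canon (.node cs) = .node ds ∧ (ds : Multiset PreTree) = key cs :=
  ⟨_, canon_node cs, coe_eq_coe.2 (List.mergeSort_perm _ _)⟩

theorem canon_canon : ∀ t : PreTree, canon (canon t) = canon t := by
  refine induction_children fun cs ih => ?_
  conv_lhs => rw [canon_node cs]
  rw [canon_node_eq_canon_node_iff, key, key, coe_eq_coe]
  have hcs : (cs.map canon).map canon = cs.map canon := by
    rw [List.map_map]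
    exact List.map_congr_left ih
  refine ((List.mergeSort_perm _ _).map canon).trans ?_
  rw [hcs]

theorem canon_size : ∀ t : PreTree, size (canon t) = size t := by
  refine induction_children fun cs ih => ?_
  rw [canon_node, size_node, size_node, ((List.mergeSort_perm _ _).map size).sum_eq,
    List.map_map]
  exact congrArg (1 + List.sum ·) (List.map_congr_left ih)

@[simp]
theorem canon_leaf : canon leaf = leaf := by
  simp [leaf, canon_node]

theorem canon_eq_leaf_iff {t : PreTree} : canon t = leaf ↔ t = leaf := by
  refine ⟨fun h => ?_, fun h => h ▸ canon_leaf⟩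
  cases t with
  | node cs =>
    rw [← canon_leaf, leaf, canon_node_eq_canon_node_iff, key, key] at h
    simpa [leaf] using h

theorem key_eq_of_coe_eq_key {cs ds : List PreTree} (h : (ds : Multiset PreTree) = key cs) :
    key ds = key cs := by
  rw [key_eq_map_canon, h, key_eq_map_canon, map_map]
  simp only [Function.comp_def, canon_canon]

noncomputable def ofKey (M : Multiset PreTree) : PreTree := canon (.node M.toList)

theorem map_canon_map_node (L : Multiset (List PreTree)) :
    (L.map node).map canon = (L.map key).map ofKey := by
  rw [map_map, map_map]
  refine Multiset.map_congr rfl fun cs _ => ?_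
  rw [Function.comp_apply, Function.comp_apply, ofKey, canon_node_eq_canon_node_iff,
    key_eq_map_canon (toList _), coe_toList, key_eq_map_canon, map_map]
  simp only [Function.comp_def, canon_canon]

/- Raw versions of the growth and pruning operators, before passing to canonical forms:
`grow t` attaches a new last child to each vertex of `t` in turn, `prune t` deletes each
terminal vertex of `t` in turn. -/
mutual
def grow : PreTree → Multiset PreTree
  | .node cs => .node (cs ++ [leaf]) ::ₘ (growList cs).map .node
def growList : List PreTree → Multiset (List PreTree)
  | [] => 0
  | c :: cs => (grow c).map (· :: cs) + (growList cs).map (c :: ·)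
end

mutual
def prune : PreTree → Multiset PreTree
  | .node cs => (pruneList cs).map .node
def pruneList : List PreTree → Multiset (List PreTree)
  | [] => 0
  | c :: cs => (if c = leaf then {cs} else (prune c).map (· :: cs)) + (pruneList cs).map (c :: ·)
end

theorem grow_node (cs : List PreTree) :
    grow (.node cs) = .node (cs ++ [leaf]) ::ₘ (growList cs).map .node := by
  rw [grow]

theorem growList_cons (c : PreTree) (cs : List PreTree) :
    growList (c :: cs) = (grow c).map (· :: cs) + (growList cs).map (c :: ·) := by
  rw [growList]

theorem prune_node (cs : List PreTree) : prune (.node cs) = (pruneList cs).map .node := by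
  rw [prune]

theorem pruneList_cons (c : PreTree) (cs : List PreTree) :
    pruneList (c :: cs) =
      (if c = leaf then {cs} else (prune c).map (· :: cs)) + (pruneList cs).map (c :: ·) := by
  rw [pruneList]

@[simp]
theorem prune_leaf : prune leaf = 0 := by
  rw [leaf, prune_node, pruneList]
  rfl

mutual
theorem size_of_mem_grow : ∀ {t u : PreTree}, u ∈ grow t → size u = size t + 1
  | .node cs, u, hu => by
    rw [grow_node, mem_cons, mem_map] at hu
    rcases hu with rfl | ⟨es, hes, rfl⟩
    · simp [size_node]
      omega
    · simp only [size_node, sum_size_of_mem_growList hes]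
      omega
theorem sum_size_of_mem_growList : ∀ {cs es : List PreTree}, es ∈ growList cs →
    (es.map size).sum = (cs.map size).sum + 1
  | [], es, h => by simp [growList] at h
  | c :: cs, es, h => by
    rw [growList_cons, mem_add, mem_map, mem_map] at h
    rcases h with ⟨x, hx, rfl⟩ | ⟨es, hes, rfl⟩
    · simp only [List.map_cons, List.sum_cons, size_of_mem_grow hx]
      omega
    · simp only [List.map_cons, List.sum_cons, sum_size_of_mem_growList hes]
      omega
end

mutual
theorem size_of_mem_prune : ∀ {t u : PreTree}, u ∈ prune t → size u + 1 = size t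
  | .node cs, u, hu => by
    rw [prune_node, mem_map] at hu
    obtain ⟨ds, hds, rfl⟩ := hu
    rw [size_node, size_node, ← sum_size_of_mem_pruneList hds]
    omega
theorem sum_size_of_mem_pruneList : ∀ {cs ds : List PreTree}, ds ∈ pruneList cs →
    (ds.map size).sum + 1 = (cs.map size).sum
  | [], ds, h => by simp [pruneList] at h
  | c :: cs, ds, h => by
    rw [pruneList_cons, mem_add, mem_map] at h
    rcases h with h | ⟨ds, hds, rfl⟩
    · split_ifs at h with hc
      · rw [mem_singleton.1 h, hc, List.map_cons, List.sum_cons, size_leaf]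
        omega
      · obtain ⟨x, hx, rfl⟩ := mem_map.1 h
        simp only [List.map_cons, List.sum_cons, ← size_of_mem_prune hx]
        omega
    · simp only [List.map_cons, List.sum_cons, ← sum_size_of_mem_pruneList hds]
      omega
end

theorem ne_leaf_of_mem_grow {t u : PreTree} (hu : u ∈ grow t) : u ≠ leaf := by
  rintro rfl
  have := size_of_mem_grow hu
  have := size_pos t
  simp only [size_leaf] at *
  omega

theorem pruneList_append_leaf (cs : List PreTree) :
    pruneList (cs ++ [leaf]) = (pruneList cs).map (· ++ [leaf]) + {cs} := by
  induction cs with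
  | nil => simp [pruneList]
  | cons c cs ih =>
    rw [List.cons_append, pruneList_cons, ih, pruneList_cons]
    split_ifs <;> simp [add_assoc]

mutual
theorem grow_bind_prune : ∀ t : PreTree,
    (grow t).bind prune = (prune t).bind grow + replicate (size t) t
  | .node cs => by
    simp only [grow_node, prune_node, cons_bind, Multiset.bind_map, pruneList_append_leaf]
    rw [← Multiset.map_bind, growList_bind_pruneList cs]
    simp only [bind_cons, Multiset.map_add, map_map, map_replicate, map_singleton,
      Multiset.map_bind, size_node, Function.comp_def, add_comm 1, replicate_add, replicate_one]
    abel
theorem growList_bind_pruneList : ∀ cs : List PreTree,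
    (growList cs).bind pruneList = (pruneList cs).bind growList + replicate (cs.map size).sum cs
  | [] => by simp [growList, pruneList]
  | c :: cs => by
    have hgrown : (grow c).bind (fun x => pruneList (x :: cs)) =
        ((grow c).bind prune).map (· :: cs) +
          (pruneList cs).bind (fun ds => (grow c).map (· :: ds)) := by
      rw [Multiset.bind_congr fun x hx => by
          rw [pruneList_cons, if_neg (ne_leaf_of_mem_grow hx)],
        bind_add, Multiset.map_bind, bind_map_comm]
    rw [growList_cons, add_bind, Multiset.bind_map, Multiset.bind_map, hgrown, grow_bind_prune c]
    simp only [pruneList_cons, growList_cons, bind_add, add_bind, Multiset.bind_map]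
    rw [← Multiset.map_bind (growList cs) pruneList, growList_bind_pruneList cs,
      ← Multiset.map_bind]
    simp only [Multiset.map_add, map_replicate, List.map_cons, List.sum_cons, replicate_add]
    split_ifs with hc
    · subst hc
      have hsingle : (growList cs).bind (fun es => {es}) = growList cs :=
        (Multiset.bind_singleton _ id).trans (map_id _)
      simp only [size_leaf, prune_leaf, zero_bind, map_zero, singleton_bind, replicate_one,
        hsingle]
      abel
    · simp only [Multiset.bind_map, growList_cons, bind_add, Multiset.map_bind,
        bind_map_comm (prune c)]
      abel
end

/-- The keys of the child lists obtained from the children `M` by replacing one child `c` with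
a list of children whose key lies in `g c`. Unlike `growList` and `pruneList`, this visibly
depends only on the multiset `M`. -/
def replaceOne (g : PreTree → Multiset (Multiset PreTree)) (M : Multiset PreTree) :
    Multiset (Multiset PreTree) :=
  M.bind fun c => (g c).map (· + (M.erase c).map canon)

theorem map_key_eq_replaceOne {L : List PreTree → Multiset (List PreTree)}
    (h : PreTree → Multiset (List PreTree)) (nil : L [] = 0)
    (cons : ∀ c cs, L (c :: cs) = (h c).map (· ++ cs) + (L cs).map (c :: ·)) :
    ∀ cs, (L cs).map key = replaceOne (fun c => (h c).map key) cs
  | [] => by simp [nil, replaceOne]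
  | c :: cs => by
    have hL : (L cs).map (key ∘ (c :: ·)) =
        (replaceOne (fun c => (h c).map key) cs).map (canon c ::ₘ ·) := by
      rw [← map_key_eq_replaceOne h nil cons cs, map_map]
      rfl
    rw [cons, Multiset.map_add, map_map, map_map, hL, replaceOne, replaceOne, ← cons_coe,
      cons_bind, erase_cons_head, Multiset.map_bind]
    congr 1
    · rw [map_map]
      exact Multiset.map_congr rfl fun l _ => key_append l cs
    · refine Multiset.bind_congr fun d hd => ?_
      rw [erase_cons_tail_of_mem hd, map_cons, map_map]
      exact Multiset.map_congr rfl fun x _ => (add_cons _ _ _).symm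

theorem replaceOne_map_canon {g : PreTree → Multiset (Multiset PreTree)} {M : Multiset PreTree}
    (hg : ∀ c ∈ M, g (canon c) = g c) : replaceOne g (M.map canon) = replaceOne g M := by
  rw [replaceOne, replaceOne, Multiset.bind_map]
  refine Multiset.bind_congr fun c hc => ?_
  rw [hg c hc, ← map_erase_of_mem _ _ hc, map_map]
  simp only [Function.comp_def, canon_canon]

theorem growList_map_key (cs : List PreTree) :
    (growList cs).map key = replaceOne (fun c => ((grow c).map canon).map ({·})) cs := by
  rw [map_key_eq_replaceOne (fun c => (grow c).map ([·])) (by rw [growList])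
    (fun c cs => by rw [growList_cons, map_map]; rfl)]
  simp only [map_map]
  rfl

theorem pruneList_map_key (cs : List PreTree) :
    (pruneList cs).map key =
      replaceOne (fun c => if c = leaf then {0} else ((prune c).map canon).map ({·})) cs := by
  rw [map_key_eq_replaceOne (fun c => if c = leaf then {[]} else (prune c).map ([·]))
    (by rw [pruneList]) (fun c cs => by rw [pruneList_cons]; split_ifs <;> simp)]
  congr with c : 1
  split_ifs
  · rfl
  · rw [map_map, map_map]
    rfl

theorem map_canon_grow_canon : ∀ t : PreTree, (grow (canon t)).map canon = (grow t).map canon := by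
  refine induction_children fun cs ih => ?_
  obtain ⟨ds, hcanon, hds⟩ := exists_canon_node_eq cs
  rw [hcanon, grow_node, grow_node, map_cons, map_cons, map_canon_map_node, map_canon_map_node,
    growList_map_key, growList_map_key, hds, key_eq_map_canon,
    replaceOne_map_canon fun c hc => by rw [ih c hc]]
  congr 1
  rw [canon_node_eq_canon_node_iff, key_append, key_append, key_eq_of_coe_eq_key hds]

theorem map_canon_prune_canon :
    ∀ t : PreTree, (prune (canon t)).map canon = (prune t).map canon := by
  refine induction_children fun cs ih => ?_
  obtain ⟨ds, hcanon, hds⟩ := exists_canon_node_eq cs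
  rw [hcanon, prune_node, prune_node, map_canon_map_node, map_canon_map_node, pruneList_map_key,
    pruneList_map_key, hds, key_eq_map_canon,
    replaceOne_map_canon fun c hc => by simp only [canon_eq_leaf_iff, ih c hc]]

theorem map_canon_grow_bind_prune (t : PreTree) :
    ((grow t).map canon).bind (fun u => (prune u).map canon) =
      ((prune t).map canon).bind (fun v => (grow v).map canon) + replicate (size t) (canon t) := by
  simp only [Multiset.bind_map, map_canon_prune_canon, map_canon_grow_canon]
  rw [← Multiset.map_bind, ← Multiset.map_bind, grow_bind_prune, Multiset.map_add, map_replicate]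

theorem addLeafAtList_append (c : PreTree) (cs : List PreTree) (p : List ℕ) :
    ∀ pre : List PreTree, addLeafAtList (pre ++ c :: cs) pre.length p = pre ++ addLeafAt c p :: cs
  | [] => by simp [addLeafAtList]
  | d :: pre => by
    rw [List.cons_append, List.length_cons, addLeafAtList, addLeafAtList_append c cs p pre,
      List.cons_append]

theorem removeAtList_append (c : PreTree) (cs : List PreTree) (p : List ℕ) :
    ∀ pre : List PreTree, removeAtList (pre ++ c :: cs) pre.length p = pre ++ removeAt c p :: cs
  | [] => by simp [removeAtList]
  | d :: pre => by
    rw [List.cons_append, List.length_cons, removeAtList, removeAtList_append c cs p pre,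
      List.cons_append]

mutual
theorem grow_eq : ∀ t : PreTree, grow t = ((positions t).map (addLeafAt t) : List PreTree)
  | .node cs => by
    have := growList_eq cs []
    simp only [List.nil_append, List.length_nil] at this
    rw [grow_node, positions, List.map_cons, ← cons_coe, addLeafAt, this]
theorem growList_eq : ∀ cs pre : List PreTree,
    (growList cs).map (fun es => node (pre ++ es)) =
      ((positionsList pre.length cs).map (addLeafAt (.node (pre ++ cs))) : List PreTree)
  | [], pre => by rw [growList, positionsList]; rfl
  | c :: cs, pre => by
    have := growList_eq cs (pre ++ [c])
    simp only [List.length_append, List.length_singleton, List.append_assoc,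
      List.singleton_append] at this
    rw [growList_cons, Multiset.map_add, map_map, map_map, positionsList, List.map_append,
      ← coe_add, List.map_map]
    refine congrArg₂ (· + ·) ?_ this
    rw [grow_eq c, map_coe, List.map_map]
    congr 2 with p
    simp [addLeafAt, addLeafAtList_append]
end

theorem ne_nil_of_mem_termPositionsList :
    ∀ {i : ℕ} {cs : List PreTree} {q : List ℕ}, q ∈ termPositionsList i cs → q ≠ []
  | _, [], _, h => by simp [termPositionsList] at h
  | _, c :: cs, _, h => by
    rw [termPositionsList, List.mem_append, List.mem_map] at h
    rcases h with ⟨p, _, rfl⟩ | h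
    · exact List.cons_ne_nil _ _
    · exact ne_nil_of_mem_termPositionsList h

theorem ne_nil_of_mem_termPositions {t : PreTree} (ht : t ≠ leaf) {q : List ℕ}
    (hq : q ∈ termPositions t) : q ≠ [] := by
  obtain ⟨_ | ⟨c, cs⟩⟩ := t
  · exact absurd rfl ht
  · rw [termPositions] at hq
    exact ne_nil_of_mem_termPositionsList hq

-- `prune leaf = 0`, whereas `termPositions leaf = [[]]` and `removeAt leaf [] = leaf`.
mutual
theorem prune_eq : ∀ t : PreTree, t ≠ leaf →
    prune t = ((termPositions t).map (removeAt t) : List PreTree)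
  | .node [], h => absurd rfl h
  | .node (c :: cs), _ => by
    have := pruneList_eq (c :: cs) []
    simp only [List.nil_append, List.length_nil] at this
    rw [prune_node, termPositions, ← this]
theorem pruneList_eq : ∀ cs pre : List PreTree,
    (pruneList cs).map (fun es => node (pre ++ es)) =
      ((termPositionsList pre.length cs).map (removeAt (.node (pre ++ cs))) : List PreTree)
  | [], pre => by rw [pruneList, termPositionsList]; rfl
  | c :: cs, pre => by
    have := pruneList_eq cs (pre ++ [c])
    simp only [List.length_append, List.length_singleton, List.append_assoc,
      List.singleton_append] at this
    rw [pruneList_cons, Multiset.map_add, map_map, termPositionsList, List.map_append, ← coe_add,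
      List.map_map]
    refine congrArg₂ (· + ·) ?_ this
    split_ifs with hc
    · subst hc
      simp [termPositions, leaf, removeAt, List.eraseIdx_append_of_length_le]
    · rw [prune_eq c hc, map_coe, map_coe, List.map_map, List.map_map]
      congr 1
      refine List.map_congr_left fun p hp => ?_
      obtain ⟨b, p, rfl⟩ := List.exists_cons_of_ne_nil (ne_nil_of_mem_termPositions hc hp)
      simp [removeAt, removeAtList_append]
end

theorem length_filter_eq_count {α β : Type*} [DecidableEq β] (l : List α) (f : α → β) (b : β) :
    (l.filter (fun a => f a = b)).length = count b ((l : Multiset α).map f) := by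
  rw [map_coe, coe_count, List.count, List.countP_map, ← List.countP_eq_length_filter]
  exact List.countP_congr fun x _ => by simp

theorem ncoef_eq_count (s t : PreTree) : ncoef s t = count t ((grow s).map canon) := by
  rw [ncoef, grow_eq, map_coe, List.map_map, ← map_coe]
  exact length_filter_eq_count _ _ t

theorem mcoef_eq_count (s : PreTree) {t : PreTree} (ht : t ≠ leaf) :
    mcoef s t = count s ((prune t).map canon) := by
  rw [mcoef, prune_eq t ht, map_coe, List.map_map, ← map_coe]
  exact length_filter_eq_count _ _ s

theorem append_singleton_mem_growList {x u : PreTree} (hx : x ∈ grow u) :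
    ∀ pre : List PreTree, pre ++ [x] ∈ growList (pre ++ [u])
  | [] => by
    rw [List.nil_append, growList_cons]
    exact mem_add.2 (Or.inl (mem_map_of_mem _ hx))
  | d :: pre => by
    rw [List.cons_append, growList_cons]
    exact mem_add.2 (Or.inr (mem_map_of_mem _ (append_singleton_mem_growList hx pre)))

theorem exists_mem_grow : ∀ t : PreTree, t ≠ leaf → ∃ u, t ∈ grow u := by
  refine induction_children fun cs ih hne => ?_
  obtain ⟨pre, c, rfl⟩ : ∃ pre c, cs = pre ++ [c] :=
    (List.eq_nil_or_concat' cs).resolve_left (by rintro rfl; exact hne rfl)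
  by_cases hc : c = leaf
  · subst hc
    exact ⟨.node pre, by rw [grow_node]; exact mem_cons_self _ _⟩
  · obtain ⟨u, hu⟩ := ih c (by simp) hc
    refine ⟨.node (pre ++ [u]), ?_⟩
    rw [grow_node]
    exact mem_cons_of_mem (mem_map_of_mem _ (append_singleton_mem_growList hu pre))

theorem mem_treeList_succ {n : ℕ} {t : PreTree} :
    t ∈ treeList (n + 2) ↔ ∃ s ∈ treeList (n + 1), t ∈ (grow s).map canon := by
  simp only [treeList, List.mem_dedup, List.mem_flatMap, grow_eq, map_coe, mem_coe, List.map_map,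
    Function.comp_def]

theorem canon_eq_and_size_eq_of_mem_treeList :
    ∀ {n : ℕ} {t : PreTree}, t ∈ treeList n → canon t = t ∧ size t = n
  | 0, t, h => by simp [treeList] at h
  | 1, t, h => by
    rw [treeList, List.mem_singleton] at h
    exact h ▸ ⟨canon_leaf, size_leaf⟩
  | n + 2, t, h => by
    obtain ⟨s, hs, hts⟩ := mem_treeList_succ.1 h
    obtain ⟨x, hx, rfl⟩ := mem_map.1 hts
    rw [canon_canon, canon_size, size_of_mem_grow hx,
      (canon_eq_and_size_eq_of_mem_treeList hs).2]
    exact ⟨rfl, rfl⟩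

theorem mem_treeList_of_canon_eq {t : PreTree} (ht : canon t = t) : t ∈ treeList (size t) := by
  induction h : size t using Nat.strong_induction_on generalizing t with
  | _ n ih =>
    by_cases hleaf : t = leaf
    · subst hleaf h
      simp [treeList]
    obtain ⟨u, hu⟩ := exists_mem_grow t hleaf
    have hsize := size_of_mem_grow hu
    obtain ⟨k, hk⟩ : ∃ k, size u = k + 1 := ⟨size u - 1, by have := size_pos u; omega⟩
    have hcanon_u : canon u ∈ treeList (size u) :=
      ih (size u) (by omega) (canon_canon u) (canon_size u)
    rw [hk] at hcanon_u
    rw [← h, hsize, hk, mem_treeList_succ]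
    exact ⟨canon u, hcanon_u, by rw [map_canon_grow_canon, ← ht]; exact mem_map_of_mem _ hu⟩

theorem mem_trees_iff {n : ℕ} {t : PreTree} : t ∈ trees n ↔ canon t = t ∧ size t = n := by
  rw [trees, List.mem_toFinset]
  exact ⟨canon_eq_and_size_eq_of_mem_treeList, fun ⟨hc, hs⟩ => hs ▸ mem_treeList_of_canon_eq hc⟩

theorem ne_leaf_of_mem_trees {n : ℕ} {t : PreTree} (ht : t ∈ trees n) (hn : 1 < n) :
    t ≠ leaf := by
  rintro rfl
  rw [mem_trees_iff, size_leaf] at ht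
  omega

theorem mem_trees_of_mem_grow {n : ℕ} {s u : PreTree} (hs : s ∈ trees n)
    (hu : u ∈ (grow s).map canon) : u ∈ trees (n + 1) := by
  obtain ⟨x, hx, rfl⟩ := mem_map.1 hu
  rw [mem_trees_iff] at hs ⊢
  rw [canon_canon, canon_size, size_of_mem_grow hx, hs.2]
  exact ⟨rfl, rfl⟩

theorem mem_trees_of_mem_prune {n : ℕ} {t v : PreTree} (ht : t ∈ trees (n + 1))
    (hv : v ∈ (prune t).map canon) : v ∈ trees n := by
  obtain ⟨x, hx, rfl⟩ := mem_map.1 hv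
  rw [mem_trees_iff] at ht ⊢
  have := size_of_mem_prune hx
  rw [canon_canon, canon_size]
  exact ⟨rfl, by omega⟩

theorem count_bind_eq_sum {α β : Type*} [DecidableEq α] [DecidableEq β] (S : Finset β)
    {m : Multiset β} (hm : ∀ x ∈ m, x ∈ S) (f : β → Multiset α) (a : α) :
    count a (m.bind f) = ∑ x ∈ S, count x m * count a (f x) := by
  rw [count_bind, Finset.sum_multiset_map_count,
    Finset.sum_subset fun x hx => hm x (mem_toFinset.1 hx)]
  · simp
  · intro x _ hx
    simp [count_eq_zero_of_notMem fun h => hx (mem_toFinset.2 h)]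

theorem sum_ncoef_mul_mcoef {k : ℕ} {t : PreTree} (ht : t ∈ trees (k + 1)) (t' : PreTree) :
    ∑ u ∈ trees (k + 2), ncoef t u * mcoef t' u =
      ∑ v ∈ trees k, mcoef v t * ncoef v t' + if t = t' then k + 1 else 0 := by
  obtain ⟨hcanon, hsize⟩ := mem_trees_iff.1 ht
  calc ∑ u ∈ trees (k + 2), ncoef t u * mcoef t' u
      = ∑ u ∈ trees (k + 2), count u ((grow t).map canon) * count t' ((prune u).map canon) :=
        Finset.sum_congr rfl fun u hu => by
          rw [ncoef_eq_count, mcoef_eq_count _ (ne_leaf_of_mem_trees hu (by omega))]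
    _ = count t' (((grow t).map canon).bind fun u => (prune u).map canon) :=
        (count_bind_eq_sum _ (fun u hu => mem_trees_of_mem_grow ht hu) _ _).symm
    _ = count t' (((prune t).map canon).bind fun v => (grow v).map canon) +
          if t = t' then k + 1 else 0 := by
        rw [map_canon_grow_bind_prune, count_add, count_replicate, hcanon, hsize]
    _ = ∑ v ∈ trees k, mcoef v t * ncoef v t' + if t = t' then k + 1 else 0 := by
        rw [count_bind_eq_sum _ (fun v hv => mem_trees_of_mem_prune ht hv)]
        congr 1
        refine Finset.sum_congr rfl fun v hv => ?_
        have hk : 0 < k := (mem_trees_iff.1 hv).2 ▸ size_pos v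
        rw [ncoef_eq_count, mcoef_eq_count _ (ne_leaf_of_mem_trees ht (by omega))]

theorem treeList_nodup : ∀ n : ℕ, (treeList n).Nodup
  | 0 => List.nodup_nil
  | 1 => List.nodup_singleton _
  | _ + 2 => List.nodup_dedup _

theorem sum_trees {M : Type*} [AddCommMonoid M] (n : ℕ) (f : PreTree → M) :
    ∑ t ∈ trees n, f t = ((treeList n).map f).sum :=
  List.sum_toFinset f (treeList_nodup n)

@[simp]
theorem trees_zero : trees 0 = ∅ := rfl

theorem nWt_eq_sum {n : ℕ} {t : PreTree} (ht : size t = n + 2) :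
    nWt t = ∑ s ∈ trees (n + 1), nWt s * ncoef s t := by
  rw [nWt, ht, show n + 2 - 1 = n + 1 from rfl, nGen, size_leaf, add_comm 1, ← sum_trees]
  refine Finset.sum_congr rfl fun s hs => ?_
  rw [nWt, (mem_trees_iff.1 hs).2, Nat.add_sub_cancel]

theorem mWt_eq_sum {n : ℕ} {t : PreTree} (ht : size t = n + 2) :
    mWt t = ∑ s ∈ trees (n + 1), mcoef s t * mWt s := by
  rw [mWt, ht, show n + 2 - 1 = n + 1 from rfl, mGen, ht, show n + 2 - 1 = n + 1 from rfl,
    ← sum_trees]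
  refine Finset.sum_congr rfl fun s hs => ?_
  rw [mWt, (mem_trees_iff.1 hs).2, Nat.add_sub_cancel]

theorem sum_nWt_mul_mcoef : ∀ (n : ℕ) {s : PreTree}, s ∈ trees n →
    ∑ t ∈ trees (n + 1), nWt t * mcoef s t = (n + 1).choose 2 * nWt s
  | 0, s, hs => by simp at hs
  | k + 1, s, hs => by
    calc ∑ t ∈ trees (k + 2), nWt t * mcoef s t
        = ∑ s' ∈ trees (k + 1), nWt s' * ∑ t ∈ trees (k + 2), ncoef s' t * mcoef s t := by
          simp only [Finset.mul_sum, ← mul_assoc]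
          rw [Finset.sum_comm]
          refine Finset.sum_congr rfl fun t ht => ?_
          rw [nWt_eq_sum (mem_trees_iff.1 ht).2, Finset.sum_mul]
      _ = ∑ v ∈ trees k, (∑ s' ∈ trees (k + 1), nWt s' * mcoef v s') * ncoef v s +
            (k + 1) * nWt s := by
          rw [Finset.sum_congr rfl fun s' hs' => by rw [sum_ncoef_mul_mcoef hs' s]]
          simp only [mul_add, Finset.sum_add_distrib, Finset.mul_sum, Finset.sum_mul, mul_ite,
            mul_zero, Finset.sum_ite_eq', hs, if_true, mul_assoc, mul_comm (nWt s)]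
          rw [Finset.sum_comm]
          ring
      _ = (k + 2).choose 2 * nWt s := by
          rw [Finset.sum_congr rfl fun v hv => by rw [sum_nWt_mul_mcoef k hv],
            Finset.sum_congr rfl fun v _ => mul_assoc _ _ _, ← Finset.mul_sum]
          rcases k with _ | j
          · simp
          · rw [← nWt_eq_sum (mem_trees_iff.1 hs).2, Nat.choose_succ_succ' (j + 2),
              Nat.choose_one_right]
            ring

theorem sum_mWt_mul_nWt : ∀ n : ℕ, 1 ≤ n →
    ∑ t ∈ trees n, mWt t * nWt t = ∏ i ∈ Finset.Icc 2 n, i.choose 2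
  | 0, h => absurd h (by norm_num)
  | 1, _ => by simp [trees, treeList, mWt, nWt, mGen, nGen]
  | k + 2, _ => by
    calc ∑ t ∈ trees (k + 2), mWt t * nWt t
        = ∑ s ∈ trees (k + 1), mWt s * ∑ t ∈ trees (k + 2), nWt t * mcoef s t := by
          simp only [Finset.mul_sum]
          rw [Finset.sum_comm]
          refine Finset.sum_congr rfl fun t ht => ?_
          rw [mWt_eq_sum (mem_trees_iff.1 ht).2, Finset.sum_mul]
          exact Finset.sum_congr rfl fun s _ => by ring
      _ = (k + 2).choose 2 * ∑ s ∈ trees (k + 1), mWt s * nWt s := by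
          rw [Finset.mul_sum]
          exact Finset.sum_congr rfl fun s hs => by rw [sum_nWt_mul_mcoef _ hs]; ring
      _ = ∏ i ∈ Finset.Icc 2 (k + 2), i.choose 2 := by
          rw [sum_mWt_mul_nWt (k + 1) le_add_self,
            Finset.prod_Icc_succ_top (show 2 ≤ k + 1 + 1 by omega), mul_comm]

end PreTree

open PreTree in
/-- `π_n` is a probability measure on `𝒯_n`:
`Σ_{t ∈ 𝒯_n} m(t) n(t) = ∏_{i=2}^n C(i,2)`, i.e. `Σ_{t ∈ 𝒯_n} π_n(t) = 1`. -/
theorem piM_is_probability (n : ℕ) (hn : 1 ≤ n) :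
    (∑ t ∈ trees n, mWt t * nWt t) = (∏ i ∈ Finset.Icc 2 n, Nat.choose i 2)
      ∧ ∑ t ∈ trees n, piM n t = 1 := by
  have hsum := sum_mWt_mul_nWt n hn
  refine ⟨hsum, ?_⟩
  have hprod : (∏ i ∈ Finset.Icc 2 n, (i.choose 2 : ℚ)) ≠ 0 :=
    Finset.prod_ne_zero_iff.2 fun i hi => by
      exact_mod_cast (Nat.choose_pos (Finset.mem_Icc.1 hi).1).ne'
  simp only [piM, ← Finset.sum_div]
  rw [div_eq_one_iff_eq hprod]
  exact_mod_cast hsum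

end RootedTreeChain
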